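/- arXiv:1302.4359 — 2 statements merged into one kernel-verified Lean document; each statement's English description precedes it below -/
import Mathlib

section
/- If an infinite binary word w is uniformly recurrent and of bounded width, then w is bounded weakly abelian periodic. -/
open Filter Topology

/-- Number of 1's (`true`) in the length-`n` prefix of the infinite binary word `w`. -/
def ones (w : ℕ → Bool) (n : ℕ) : ℕ :=
  ((Finset.range n).filter (fun i => w i = true)).card

/-- Number of 0's (`false`) in the length-`n` prefix of `w`. -/
def zeros (w : ℕ → Bool) (n : ℕ) : ℕ := n - ones w n

/-- The graphic of `w`: `g_w(n) = |pref_n(w)|₁ - |pref_n(w)|₀`. -/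
def graphic (w : ℕ → Bool) (n : ℕ) : ℤ := (ones w n : ℤ) - (zeros w n : ℤ)

/-- `w` is weakly abelian periodic with frequency `ρ` of the letter 1 in the blocks:
there is a factorization `w = v₀v₁v₂⋯` (cut points `k 0 < k 1 < ⋯`, with `v₀` the
prefix of length `k 0`) such that each block `vᵢ = w[k i, k (i+1))`, `i ≥ 1`,
has frequency `ρ` of the letter 1. -/
def WAPwith (w : ℕ → Bool) (ρ : ℚ) : Prop :=
  ∃ k : ℕ → ℕ, StrictMono k ∧
    ∀ i : ℕ, ((ones w (k (i+1)) : ℚ) - (ones w (k i) : ℚ))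
      = ρ * ((k (i+1) : ℚ) - (k i : ℚ))

/-- `w` is weakly abelian periodic. -/
def WAP (w : ℕ → Bool) : Prop := ∃ ρ : ℚ, WAPwith w ρ

/-- `w` is bounded weakly abelian periodic: WAP with blocks of uniformly bounded length. -/
def BoundedWAP (w : ℕ → Bool) : Prop :=
  ∃ (ρ : ℚ) (k : ℕ → ℕ) (C : ℕ), StrictMono k ∧ (∀ i, k (i+1) - k i ≤ C) ∧
    ∀ i : ℕ, ((ones w (k (i+1)) : ℚ) - (ones w (k i) : ℚ))
      = ρ * ((k (i+1) : ℚ) - (k i : ℚ))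

/-- `w` has bounded width: its graphic lies between two parallel lines with
rational coefficients. -/
def BoundedWidth (w : ℕ → Bool) : Prop :=
  ∃ a b₁ b₂ : ℚ, ∀ n : ℕ,
    a * n + b₁ ≤ (graphic w n : ℚ) ∧ (graphic w n : ℚ) ≤ a * n + b₂

/-- `w` is uniformly recurrent: each factor of `w` occurs in `w` with bounded gaps. -/
def UniformlyRecurrent (w : ℕ → Bool) : Prop :=
  ∀ i n : ℕ, ∃ C : ℕ, ∀ m : ℕ, ∃ j : ℕ, m ≤ j ∧ j ≤ m + C ∧ ∀ l < n, w (j + l) = w (i + l)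

theorem ones_succ' (w : ℕ → Bool) (n : ℕ) :
    ones w (n+1) = ones w n + (if w n = true then 1 else 0) := by
  unfold ones
  rw [Finset.range_add_one, Finset.filter_insert]
  split
  · rw [Finset.card_insert_of_notMem (by simp)]
  · simp

theorem ones_le' (w : ℕ → Bool) (n : ℕ) : ones w n ≤ n :=
  le_trans (Finset.card_filter_le _ _) (le_of_eq (Finset.card_range n))

theorem graphic_eq' (w : ℕ → Bool) (n : ℕ) :
    graphic w n = 2 * (ones w n : ℤ) - n := by
  have := ones_le' w n
  unfold graphic zeros
  omega

theorem ones_shift' (w : ℕ → Bool) (j s : ℕ) :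
    ∀ L, (∀ l < L, w (j + l) = w (s + l)) →
      ones w (j + L) + ones w s = ones w (s + L) + ones w j := by
  intro L
  induction L with
  | zero => intro _; simp only [Nat.add_zero]; omega
  | succ L ih =>
    intro occ
    have e1 : w (j + L) = w (s + L) := occ L (by omega)
    have e2 := ih (fun l hl => occ l (by omega))
    have r1 : j + (L + 1) = (j + L) + 1 := by omega
    have r2 : s + (L + 1) = (s + L) + 1 := by omega
    rw [r1, r2, ones_succ', ones_succ', e1]
    omega


/-- If `w` is uniformly recurrent and of bounded width, then `w` is bounded WAP. -/
theorem uniformlyRecurrent_boundedWidth_imp_boundedWAP (w : ℕ → Bool)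
    (hur : UniformlyRecurrent w) (hbw : BoundedWidth w) : BoundedWAP w := by
  obtain ⟨a, b₁, b₂, hab⟩ := hbw
  set p : ℤ := a.num with hp
  set q : ℤ := (a.den : ℤ) with hq
  have hq0 : (0:ℤ) < q := by positivity
  have hqQ0 : ((a.den : ℚ)) ≠ 0 := by positivity
  have haq : (a.den : ℚ) * a = (a.num : ℚ) := by
    have h1 := (div_eq_iff hqQ0).mp (Rat.num_div_den a)
    linear_combination -h1
  set h : ℕ → ℤ := fun n => q * graphic w n - p * n with hh
  -- h is bounded
  set lo : ℤ := ⌈(q:ℚ) * b₁⌉ with hlo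
  set hi : ℤ := ⌊(q:ℚ) * b₂⌋ with hhi
  have hbound : ∀ n, h n ∈ Set.Icc lo hi := by
    intro n
    obtain ⟨h1, h2⟩ := hab n
    have hQ : (h n : ℚ) = (q:ℚ) * (graphic w n : ℚ) - (p:ℚ) * n := by
      simp only [hh]; push_cast; ring
    have hqa : (q:ℚ) * a = (p:ℚ) := by
      simp only [hq, hp]; push_cast; exact haq
    have hqQ : (0:ℚ) < (q:ℚ) := by exact_mod_cast hq0
    constructor
    · refine Int.ceil_le.mpr ?_
      rw [hQ]
      nlinarith [mul_le_mul_of_nonneg_left h1 hqQ.le]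
    · refine Int.le_floor.mpr ?_
      rw [hQ]
      nlinarith [mul_le_mul_of_nonneg_left h2 hqQ.le]
  -- values attained infinitely often
  set T : Set ℤ := {v | {n | h n = v}.Infinite} with hT
  have hTsub : T ⊆ Set.Icc lo hi := by
    intro v hv
    obtain ⟨n, hn⟩ := hv.nonempty
    exact hn ▸ hbound n
  have hTfin : T.Finite := (Set.finite_Icc lo hi).subset hTsub
  have hTne : T.Nonempty := by
    by_contra hTe
    have hsub : (Set.univ : Set ℕ) ⊆ ⋃ v ∈ Set.Icc lo hi, {n | h n = v} :=
      fun n _ => Set.mem_biUnion (hbound n) rfl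
    have hfin : (⋃ v ∈ Set.Icc lo hi, {n | h n = v}).Finite :=
      (Set.finite_Icc lo hi).biUnion (fun v _ =>
        Set.not_infinite.mp (fun hinf => hTe ⟨v, hinf⟩))
    exact Set.infinite_univ (hfin.subset hsub)
  set Tf : Finset ℤ := hTfin.toFinset with hTfdef
  have hTfne : Tf.Nonempty := by
    rwa [hTfdef, Set.Finite.toFinset_nonempty]
  set M : ℤ := Tf.max' hTfne with hM
  set mV : ℤ := Tf.min' hTfne with hmV
  -- beyond some N, h takes only values in T
  set Bad : Set ℕ := ⋃ v ∈ Set.Icc lo hi \ T, {n | h n = v} with hBad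
  have hBadfin : Bad.Finite :=
    (((Set.finite_Icc lo hi).subset Set.diff_subset).biUnion
      (fun v hv => Set.not_infinite.mp hv.2))
  obtain ⟨N, hN⟩ := hBadfin.bddAbove
  have hmemT : ∀ n, N < n → h n ∈ Tf := by
    intro n hn
    by_contra hcon
    have hnT : h n ∉ T := by
      intro hx; exact hcon (by rwa [hTfdef, Set.Finite.mem_toFinset])
    have : n ∈ Bad := Set.mem_biUnion ⟨hbound n, hnT⟩ rfl
    exact absurd (hN this) (by omega)
  have hle : ∀ n, N < n → h n ≤ M := fun n hn => Finset.le_max' Tf _ (hmemT n hn)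
  have hge : ∀ n, N < n → mV ≤ h n := fun n hn => Finset.min'_le Tf _ (hmemT n hn)
  -- pick s, r
  have hMT : {n | h n = M}.Infinite := by
    have : M ∈ T := by
      rw [← Set.Finite.mem_toFinset hTfin]; exact Tf.max'_mem hTfne
    exact this
  have hmT : {n | h n = mV}.Infinite := by
    have : mV ∈ T := by
      rw [← Set.Finite.mem_toFinset hTfin]; exact Tf.min'_mem hTfne
    exact this
  obtain ⟨s, hsM, hNs⟩ := hMT.exists_gt N
  obtain ⟨r, hrm, hsr⟩ := hmT.exists_gt s
  set L : ℕ := r - s with hL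
  have hsL : s + L = r := by omega
  obtain ⟨C, hC⟩ := hur s (L + 1)
  choose jf hj1 hj2 hj3 using hC
  -- any occurrence of the factor w[s..r] past N has h-value M
  have hocc_val : ∀ j, N < j → (∀ l < L + 1, w (j + l) = w (s + l)) → h j = M := by
    intro j hj hoccj
    have hshift := ones_shift' w j s L (fun l hl => hoccj l (by omega))
    have e1 : h (j + L) - h j = h (s + L) - h s := by
      have hsZ : (ones w (j + L) : ℤ) + (ones w s : ℤ)
          = (ones w (s + L) : ℤ) + (ones w j : ℤ) := by exact_mod_cast hshift
      simp only [hh, graphic_eq']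
      push_cast
      linear_combination (2 * q) * hsZ
    rw [hsL, hrm, hsM] at e1
    have h2 : h (j + L) = h j + (mV - M) := by linarith
    have h3 : mV ≤ h (j + L) := hge _ (by omega)
    have h4 : h j ≤ M := hle _ hj
    omega
  -- construct the cut points
  set k : ℕ → ℕ := fun i => Nat.rec s (fun _ prev => jf (prev + 1)) i with hk
  have hk0 : k 0 = s := rfl
  have hksucc : ∀ i, k (i + 1) = jf (k i + 1) := fun i => rfl
  have hmono : ∀ i, k i < k (i + 1) := by
    intro i; rw [hksucc]; have := hj1 (k i + 1); omega
  have hNk : ∀ i, N < k i := by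
    intro i
    induction i with
    | zero => rw [hk0]; exact hNs
    | succ i ih => have := hmono i; omega
  have hgap : ∀ i, k (i + 1) - k i ≤ C + 1 := by
    intro i; rw [hksucc]; have := hj2 (k i + 1); omega
  have hkM : ∀ i, h (k i) = M := by
    intro i
    cases i with
    | zero => rw [hk0]; exact hsM
    | succ i =>
      refine hocc_val (k (i + 1)) (hNk (i + 1)) ?_
      rw [hksucc]
      exact hj3 (k i + 1)
  refine ⟨(a + 1) / 2, k, C + 1, strictMono_nat_of_lt_succ hmono, hgap, ?_⟩
  intro i
  have e : h (k (i + 1)) = h (k i) := (hkM (i + 1)).trans (hkM i).symm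
  have eZ : 2 * q * (ones w (k (i + 1)) : ℤ) - 2 * q * (ones w (k i) : ℤ)
      = (p + q) * (k (i + 1) : ℤ) - (p + q) * (k i : ℤ) := by
    simp only [hh, graphic_eq'] at e
    linarith
  have eQ := congrArg (fun z : ℤ => (z : ℚ)) eZ
  push_cast at eQ
  have goal' : 2 * (a.den : ℚ) * ((ones w (k (i + 1)) : ℚ) - (ones w (k i) : ℚ))
      = 2 * (a.den : ℚ) * ((a + 1) / 2 * ((k (i + 1) : ℚ) - (k i : ℚ))) := by
    linear_combination eQ - (((k (i + 1) : ℚ)) - (k i : ℚ)) * haq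
  exact mul_left_cancel₀ (by positivity : (2 * (a.den : ℚ)) ≠ 0) goal'
end

section
/- For a binary infinite word w: if w is not weakly abelian periodic, then the frequencies of both letters in w exist, i.e., lim_{n→∞}|pref_n(w)|₀/n exists (and then so does the frequency of 1). -/
/-!
If the prefix frequency `ones w n / n` of the letter 1 did not converge, some rational
`ρ = p / q` would lie strictly between its lim inf and lim sup, so the integer walk
`g n = q · ones w n - p · n` would be negative infinitely often and nonnegative infinitely often.
Its upward steps are at most `q - p`, so each up-crossing of `0` lands in `[0, q - p)`, and by
pigeonhole `g` takes a single value `v` infinitely often. Cutting `w` at the times where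
`g = v` gives blocks of frequency exactly `ρ`, i.e. `w` is weakly abelian periodic.
-/

open Filter Topology

section IntegerWalk

variable (g : ℕ → ℤ) (d : ℤ)

theorem frequently_mem_Ico_of_le_add (hstep : ∀ n, g (n + 1) ≤ g n + d)
    (hneg : ∃ᶠ n in atTop, g n < 0) (hnonneg : ∃ᶠ n in atTop, 0 ≤ g n) :
    ∃ᶠ n in atTop, g n ∈ Set.Ico 0 d := by
  classical
  refine frequently_atTop.mpr fun N => ?_
  obtain ⟨n, hNn, hn⟩ := frequently_atTop.mp hneg N
  have hP : ∃ m, n ≤ m ∧ 0 ≤ g m := frequently_atTop.mp hnonneg n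
  set m := Nat.find hP
  obtain ⟨hnm, hm⟩ : n ≤ m ∧ 0 ≤ g m := Nat.find_spec hP
  have hnm' : n < m := hnm.lt_of_ne fun h => by rw [h] at hn; omega
  have hprev : g (m - 1) < 0 := by
    have := Nat.find_min hP (m := m - 1) (by omega)
    push Not at this
    exact this (by omega)
  have hstep' := hstep (m - 1)
  rw [Nat.sub_add_cancel (by omega)] at hstep'
  exact ⟨m, by omega, hm, by omega⟩

theorem exists_frequently_eq_of_le_add (hstep : ∀ n, g (n + 1) ≤ g n + d)
    (hneg : ∃ᶠ n in atTop, g n < 0) (hnonneg : ∃ᶠ n in atTop, 0 ≤ g n) :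
    ∃ v, ∃ᶠ n in atTop, g n = v := by
  have hmem := frequently_mem_Ico_of_le_add g d hstep hneg hnonneg
  obtain ⟨v, -, hv⟩ := (Set.finite_Ico 0 d).frequently_exists.mp
    (hmem.mono fun n hn => ⟨g n, hn, rfl⟩ : ∃ᶠ n in atTop, ∃ v ∈ Set.Ico 0 d, g n = v)
  exact ⟨v, hv⟩

end IntegerWalk

section Word

variable (w : ℕ → Bool)

theorem ones_eq_count (n : ℕ) : ones w n = Nat.count (fun i => w i = true) n :=
  (Nat.count_eq_card_filter_range _ n).symm

theorem ones_le_self (n : ℕ) : ones w n ≤ n := by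
  rw [ones_eq_count]
  exact Nat.count_le _

theorem ones_succ (n : ℕ) : ones w (n + 1) = ones w n + (w n).toNat := by
  rw [ones_eq_count, ones_eq_count, Nat.count_succ]
  cases w n <;> rfl

theorem wapWith_of_frequently_sub_eq (ρ c : ℚ)
    (h : ∃ᶠ n in atTop, (ones w n : ℚ) - ρ * n = c) : WAPwith w ρ := by
  obtain ⟨k, hk, hkc⟩ := extraction_of_frequently_atTop h
  exact ⟨k, hk, fun i => by linarith [hkc i, hkc (i + 1)]⟩

theorem wapWith_of_frequently_lt_of_frequently_le (ρ : ℚ)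
    (hlo : ∃ᶠ n in atTop, (ones w n : ℚ) < ρ * n)
    (hhi : ∃ᶠ n in atTop, ρ * n ≤ ones w n) : WAPwith w ρ := by
  set g : ℕ → ℤ := fun n => ρ.den * ones w n - ρ.num * n
  have hden : (0 : ℚ) < ρ.den := by exact_mod_cast ρ.den_pos
  have hg : ∀ n, (g n : ℚ) = ρ.den * ((ones w n : ℚ) - ρ * n) := fun n => by
    simp only [g]
    push_cast
    linear_combination (n : ℚ) * ρ.mul_den_eq_num
  have hstep : ∀ n, g (n + 1) ≤ g n + (ρ.den - ρ.num) := fun n => by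
    have hbit : (w n).toNat ≤ 1 := Bool.toNat_le _
    simp only [g, ones_succ]
    push_cast
    nlinarith
  have hneg : ∃ᶠ n in atTop, g n < 0 := hlo.mono fun n hn => by
    have : (g n : ℚ) < 0 := by rw [hg]; nlinarith
    exact_mod_cast this
  have hnonneg : ∃ᶠ n in atTop, 0 ≤ g n := hhi.mono fun n hn => by
    have : (0 : ℚ) ≤ g n := by rw [hg]; nlinarith
    exact_mod_cast this
  obtain ⟨v, hv⟩ := exists_frequently_eq_of_le_add g _ hstep hneg hnonneg
  refine wapWith_of_frequently_sub_eq w ρ (v / ρ.den) (hv.mono fun n hn => ?_)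
  rw [← hn, hg]
  field_simp

theorem ones_div_le_one (n : ℕ) : (ones w n : ℝ) / n ≤ 1 :=
  div_le_one_of_le₀ (by exact_mod_cast ones_le_self w n) n.cast_nonneg

theorem zeros_div_eventuallyEq :
    (fun n => (zeros w n : ℝ) / n) =ᶠ[atTop] fun n => 1 - (ones w n : ℝ) / n := by
  filter_upwards [eventually_gt_atTop 0] with n hn
  rw [zeros, Nat.cast_sub (ones_le_self w n), sub_div, div_self (by positivity)]

theorem frequently_ones_lt_of_frequently_ones_div_lt {ρ : ℚ}
    (h : ∃ᶠ n in atTop, (ones w n : ℝ) / n < ρ) : ∃ᶠ n in atTop, (ones w n : ℚ) < ρ * n := by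
  refine (h.and_eventually (eventually_gt_atTop 0)).mono fun n ⟨hn, hpos⟩ => ?_
  rw [div_lt_iff₀ (by exact_mod_cast hpos)] at hn
  exact_mod_cast hn

theorem frequently_le_ones_of_frequently_lt_ones_div {ρ : ℚ}
    (h : ∃ᶠ n in atTop, (ρ : ℝ) < ones w n / n) : ∃ᶠ n in atTop, ρ * n ≤ (ones w n : ℚ) := by
  refine (h.and_eventually (eventually_gt_atTop 0)).mono fun n ⟨hn, hpos⟩ => ?_
  rw [lt_div_iff₀ (by exact_mod_cast hpos)] at hn
  exact_mod_cast hn.le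

end Word

/-- If a binary infinite word `w` is not weakly abelian periodic, then the
frequencies of both letters in `w` exist. -/
theorem not_WAP_imp_frequencies_exist (w : ℕ → Bool) (h : ¬ WAP w) :
    (∃ L : ℝ, Tendsto (fun n => (zeros w n : ℝ) / n) atTop (𝓝 L)) ∧
    (∃ L : ℝ, Tendsto (fun n => (ones w n : ℝ) / n) atTop (𝓝 L)) := by
  obtain ⟨L, hL⟩ : ∃ L : ℝ, Tendsto (fun n => (ones w n : ℝ) / n) atTop (𝓝 L) := by
    refine tendsto_of_no_upcrossings Rat.denseRange_cast ?_
      (isBoundedUnder_of ⟨1, ones_div_le_one w⟩) (isBoundedUnder_of ⟨0, fun n => by positivity⟩)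
    rintro _ ⟨a, rfl⟩ _ ⟨b, rfl⟩ hab ⟨hlo, hhi⟩
    have hhi' : ∃ᶠ n in atTop, (a : ℝ) < ones w n / n := hhi.mono fun _ hn => hab.trans hn
    exact h ⟨a, wapWith_of_frequently_lt_of_frequently_le w a
      (frequently_ones_lt_of_frequently_ones_div_lt w hlo)
      (frequently_le_ones_of_frequently_lt_ones_div w hhi')⟩
  exact ⟨⟨1 - L, (tendsto_const_nhds.sub hL).congr' (zeros_div_eventuallyEq w).symm⟩, ⟨L, hL⟩⟩
end
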